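/- Let n, p, d be integers with p prime (or a prime power), p² + p + 1 ≤ n, and n ≤ p² + p + 1 + d where d = n − (p² + p + 1) satisfies 0 ≤ d ≤ (p+1)². Then μ(n) ≤ p + ⌈d/(p+1)⌉. -/

import Mathlib

/-- The in-degree of vertex `z` in the digraph on `Fin n` with arc relation `A`
(`A x z` means `x` dominates `z`). -/
noncomputable def inDeg {n : ℕ} (A : Fin n → Fin n → Prop) (z : Fin n) : ℕ :=
  Nat.card {x : Fin n // A x z}

/-- The maximum in-degree `Δ⁻(D)` of the digraph on `Fin n` with arc relation `A`. -/
noncomputable def maxInDeg {n : ℕ} (A : Fin n → Fin n → Prop) : ℕ :=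
  Finset.univ.sup (inDeg A)

/-- A digraph is mediated if for every pair of distinct vertices `x, y` there is a
vertex `z` with `x, y ∈ N⁻[z]` (possibly `z = x` or `z = y`). -/
def Mediated {n : ℕ} (A : Fin n → Fin n → Prop) : Prop :=
  ∀ x y : Fin n, x ≠ y → ∃ z : Fin n, (x = z ∨ A x z) ∧ (y = z ∨ A y z)

/-- The `n`th mediation number `μ(n)`: the minimum of `Δ⁻(D)` over all mediated
digraphs (irreflexive arc relations) on `n` vertices. -/
noncomputable def mu (n : ℕ) : ℕ :=
  sInf { d : ℕ | ∃ A : Fin n → Fin n → Prop, Irreflexive A ∧ Mediated A ∧ maxInDeg A = d }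

/-- `f(n) = ⌈(√(4n−3) − 1)/2⌉`. -/
noncomputable def f (n : ℕ) : ℕ := ⌈(Real.sqrt (4 * (n : ℝ) - 3) - 1) / 2⌉₊

open Configuration Projectivization
open scoped LinearAlgebra.Projectivization

theorem mu_le_of_cover {V : Type*} [Fintype V] {n k : ℕ} (hV : Fintype.card V = n)
    (C : V → Set V) (hmem : ∀ z, z ∈ C z) (hsize : ∀ z, (C z).ncard ≤ k + 1)
    (hcov : ∀ x y : V, x ≠ y → ∃ z, x ∈ C z ∧ y ∈ C z) : mu n ≤ k := by
  classical
  let e : V ≃ Fin n := Fintype.equivFinOfCardEq hV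
  set A : Fin n → Fin n → Prop := fun x z => x ≠ z ∧ e.symm x ∈ C (e.symm z) with hA
  have hirr : Irreflexive A := fun x hx => hx.1 rfl
  have hmed : Mediated A := by
    intro x y hxy
    obtain ⟨z, hxz, hyz⟩ := hcov (e.symm x) (e.symm y) (fun h => hxy (by simpa using congrArg e h))
    refine ⟨e z, ?_, ?_⟩
    · rcases eq_or_ne x (e z) with h | h
      · exact Or.inl h
      · exact Or.inr ⟨h, by simpa using hxz⟩
    · rcases eq_or_ne y (e z) with h | h
      · exact Or.inl h
      · exact Or.inr ⟨h, by simpa using hyz⟩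
  have hdeg : ∀ z, inDeg A z ≤ k := by
    intro z
    set w := e.symm z with hw
    have hinj : Function.Injective
        (fun x : {x : Fin n // A x z} => (⟨e.symm x.1, x.2.2, by
          intro h
          have hh : e.symm x.1 = e.symm z := by simpa [hw, Set.mem_singleton_iff] using h
          exact x.2.1 (by simpa using congrArg e hh)⟩ : ↥(C w \ {w}))) := by
      intro a b hab
      have : e.symm a.1 = e.symm b.1 := congrArg Subtype.val hab
      exact Subtype.ext (by simpa using congrArg e this)
    have h1 : inDeg A z ≤ Nat.card ↥(C w \ {w}) := Nat.card_le_card_of_injective _ hinj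
    have h2 : (C w \ {w}).ncard = (C w).ncard - 1 := Set.ncard_diff_singleton_of_mem (hmem w)
    have h3 : Nat.card ↥(C w \ {w}) = (C w \ {w}).ncard := Nat.card_coe_set_eq _
    have h4 : 1 ≤ (C w).ncard := by
      have : 0 < (C w).ncard := (Set.ncard_pos).2 ⟨w, hmem w⟩
      omega
    have := hsize w
    omega
  have hmax : maxInDeg A ≤ k := Finset.sup_le fun z _ => hdeg z
  have hmem' : maxInDeg A ∈ { d : ℕ | ∃ A : Fin n → Fin n → Prop,
      Irreflexive A ∧ Mediated A ∧ maxInDeg A = d } := ⟨A, hirr, hmed, rfl⟩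
  exact le_trans (Nat.sInf_le hmem') hmax

theorem plane_exists_sdr (P L : Type*) [Membership P L] [Fintype P] [Fintype L]
    [ProjectivePlane P L] :
    ∃ f : L → P, Function.Bijective f ∧ ∀ l, f l ∈ l := by
  classical
  set q := ProjectivePlane.order P L with hq
  have hcard : Fintype.card P = Fintype.card L := by
    rw [ProjectivePlane.card_points P L, ProjectivePlane.card_lines P L]
  set t : L → Finset P := fun l => Finset.univ.filter (· ∈ l) with ht
  have htcard : ∀ l, (t l).card = q + 1 := by
    intro l
    have : (t l).card = Fintype.card {x : P // x ∈ l} := (Fintype.card_subtype _).symm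
    rw [this, ← Nat.card_eq_fintype_card]
    exact ProjectivePlane.pointCount_eq P l
  have hhall : ∀ s : Finset L, s.card ≤ (s.biUnion t).card := by
    intro s
    have key : s.card * (q + 1) ≤ (s.biUnion t).card * (q + 1) := by
      apply Finset.card_mul_le_card_mul (fun l x => x ∈ l)
      · intro l hl
        have hsub : t l ⊆ (s.biUnion t).bipartiteAbove (fun l x => x ∈ l) l := by
          intro x hx
          rw [Finset.mem_bipartiteAbove]
          exact ⟨Finset.mem_biUnion.2 ⟨l, hl, hx⟩, (Finset.mem_filter.1 hx).2⟩
        calc q + 1 = (t l).card := (htcard l).symm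
          _ ≤ _ := Finset.card_le_card hsub
      · intro x _
        have : (s.bipartiteBelow (fun l y => y ∈ l) x).card
            ≤ Fintype.card {l : L // x ∈ l} := by
          rw [Fintype.card_subtype]
          apply Finset.card_le_card
          intro l hl
          rw [Finset.mem_bipartiteBelow] at hl
          exact Finset.mem_filter.2 ⟨Finset.mem_univ _, hl.2⟩
        rw [← Nat.card_eq_fintype_card] at this
        calc (s.bipartiteBelow (fun l y => y ∈ l) x).card ≤ Nat.card {l : L // x ∈ l} := this
          _ = q + 1 := ProjectivePlane.lineCount_eq L x
    exact Nat.le_of_mul_le_mul_right key (Nat.succ_pos q)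
  obtain ⟨f, hfinj, hfmem⟩ := (Finset.all_card_le_biUnion_card_iff_exists_injective t).1 hhall
  refine ⟨f, (Fintype.bijective_iff_injective_and_card f).2 ⟨hfinj, hcard.symm⟩, fun l => ?_⟩
  exact (Finset.mem_filter.1 (hfmem l)).2

theorem card_projectivization (K : Type*) [Field K] [Fintype K] [DecidableEq K] :
    Nat.card (ℙ K (Fin 3 → K)) = Fintype.card K ^ 2 + Fintype.card K + 1 := by
  classical
  set q := Fintype.card K with hqdef
  have hq2 : 2 ≤ q := Fintype.one_lt_card
  haveI : Finite (ℙ K (Fin 3 → K)) := Quotient.finite _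
  haveI : Fintype (ℙ K (Fin 3 → K)) := Fintype.ofFinite _
  -- count nonzero vectors
  have hV : Fintype.card {v : Fin 3 → K // v ≠ 0} = q ^ 3 - 1 := by
    rw [Fintype.card_subtype_compl, Fintype.card_subtype_eq]
    simp [Fintype.card_fun, hqdef]
  -- fibers of mk
  have hfiber : ∀ x : ℙ K (Fin 3 → K),
      (Finset.univ.filter (fun v : {v : Fin 3 → K // v ≠ 0} => mk K v.1 v.2 = x)).card
        = q - 1 := by
    intro x
    have : Fintype.card {v : {v : Fin 3 → K // v ≠ 0} // mk K v.1 v.2 = x} = q - 1 := by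
      have hb : Function.Bijective (fun a : Kˣ =>
          (⟨⟨a • x.rep, by
            rw [Units.smul_def]
            exact smul_ne_zero (Units.ne_zero a) x.rep_nonzero⟩,
            ((mk_eq_mk_iff K _ _ (by
              rw [Units.smul_def]
              exact smul_ne_zero (Units.ne_zero a) x.rep_nonzero) x.rep_nonzero).2
              ⟨a, rfl⟩).trans (mk_rep x)⟩ :
            {v : {v : Fin 3 → K // v ≠ 0} // mk K v.1 v.2 = x})) := by
        constructor
        · intro a b hab
          have h1 : (a : K) • x.rep = (b : K) • x.rep := by
            have := congrArg (fun y => y.1.1) hab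
            simpa [Units.smul_def] using this
          have h2 := sub_eq_zero.2 h1
          rw [← sub_smul] at h2
          rcases smul_eq_zero.1 h2 with h | h
          · exact Units.ext (sub_eq_zero.1 h)
          · exact absurd h x.rep_nonzero
        · rintro ⟨⟨w, hw⟩, hmk⟩
          rw [← mk_rep x] at hmk
          obtain ⟨a, ha⟩ := (mk_eq_mk_iff K _ _ hw x.rep_nonzero).1 hmk
          exact ⟨a, by simp only [Subtype.ext_iff]; exact ha⟩
      rw [← Fintype.card_congr (Equiv.ofBijective _ hb), Fintype.card_units, hqdef]
    rw [← this, Fintype.card_subtype]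
  have hcount := Finset.card_eq_sum_card_fiberwise
    (f := fun v : {v : Fin 3 → K // v ≠ 0} => mk K v.1 v.2)
    (s := Finset.univ) (t := Finset.univ) (fun _ _ => Finset.mem_univ _)
  rw [Finset.card_univ, hV] at hcount
  have hsum : ∑ x ∈ (Finset.univ : Finset (ℙ K (Fin 3 → K))),
      (Finset.univ.filter (fun v : {v : Fin 3 → K // v ≠ 0} => mk K v.1 v.2 = x)).card
      = Fintype.card (ℙ K (Fin 3 → K)) * (q - 1) := by
    rw [Finset.sum_congr rfl (fun x _ => hfiber x), Finset.sum_const, Finset.card_univ,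
      smul_eq_mul]
  rw [hsum] at hcount
  have hfact : (q ^ 2 + q + 1) * (q - 1) = q ^ 3 - 1 := by
    have h1 : 1 ≤ q := by omega
    have h3 : 1 ≤ q ^ 3 := Nat.one_le_pow _ _ (by omega)
    zify [h1, h3]
    ring
  rw [Nat.card_eq_fintype_card]
  have hpos : 0 < q - 1 := by omega
  have := hcount.symm.trans (hfact.symm)
  exact Nat.eq_of_mul_eq_mul_right hpos (by omega)

theorem mu_card_add_le (P L : Type*) [Membership P L] [Fintype P] [Fintype L]
    [ProjectivePlane P L] (d : ℕ) :
    mu (Fintype.card P + d)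
      ≤ ProjectivePlane.order P L + d ⌈/⌉ (ProjectivePlane.order P L + 1) := by
  classical
  set q := ProjectivePlane.order P L with hqdef
  set c := d ⌈/⌉ (q + 1) with hcdef
  obtain ⟨f, hfbij, hfmem⟩ := plane_exists_sdr P L
  set e : L ≃ P := Equiv.ofBijective f hfbij with he
  set g : P → L := fun z => e.symm z with hgdef
  have hfg : ∀ z : P, f (g z) = z := fun z => e.apply_symm_apply z
  have hg : ∀ z : P, z ∈ g z := fun z => by
    have h := hfmem (g z)
    rwa [hfg z] at h
  have hgsurj : ∀ l : L, ∃ z, g z = l := fun l => ⟨f l, e.symm_apply_apply l⟩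
  -- a line L₀ and enumeration of its points
  have hLne : Nonempty L := by
    have := ProjectivePlane.card_lines P L
    exact Fintype.card_pos_iff.1 (by omega)
  obtain ⟨L₀⟩ := hLne
  have hcardL₀ : Fintype.card {u : P // u ∈ L₀} = q + 1 := by
    rw [← Nat.card_eq_fintype_card]
    exact ProjectivePlane.pointCount_eq P L₀
  set w' : Fin (q + 1) ≃ {u : P // u ∈ L₀} := (Fintype.equivFinOfCardEq hcardL₀).symm with hw'
  set w : Fin (q + 1) → P := fun i => (w' i).1 with hwdef
  have hwmem : ∀ i, w i ∈ L₀ := fun i => (w' i).2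
  have hwinj : Function.Injective w := fun i j h => w'.injective (Subtype.ext h)
  have hwsurj : ∀ u : P, u ∈ L₀ → ∃ i, w i = u := fun u hu =>
    ⟨w'.symm ⟨u, hu⟩, by simp [hwdef]⟩
  -- grid helpers
  set col : Fin d → Fin (q + 1) := fun j => ⟨j.1 % (q + 1), Nat.mod_lt _ (Nat.succ_pos q)⟩
    with hcol_def
  set row : Fin d → ℕ := fun j => j.1 / (q + 1) with hrow_def
  set filled : ℕ → Fin (q + 1) → Prop := fun t i' => t * (q + 1) + i'.1 < d with hfil_def
  have hdm : ∀ j : Fin d, (q + 1) * (j.1 / (q + 1)) + j.1 % (q + 1) = j.1 :=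
    fun j => Nat.div_add_mod _ _
  have hfilled : ∀ j : Fin d, filled (row j) (col j) := by
    intro j
    show (j.1 / (q + 1)) * (q + 1) + j.1 % (q + 1) < d
    rw [mul_comm, Nat.div_add_mod]
    exact j.2
  have hcell : ∀ (t : ℕ) (i' : Fin (q + 1)), filled t i' →
      ∃ j : Fin d, row j = t ∧ col j = i' := by
    intro t i' h
    refine ⟨⟨t * (q + 1) + i'.1, h⟩, ?_, ?_⟩
    · show (t * (q + 1) + i'.1) / (q + 1) = t
      rw [mul_comm, Nat.mul_add_div (Nat.succ_pos q)]
      simp [Nat.div_eq_of_lt i'.2]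
    · apply Fin.ext
      show (t * (q + 1) + i'.1) % (q + 1) = i'.1
      rw [mul_comm, Nat.mul_add_mod]
      exact Nat.mod_eq_of_lt i'.2
  have hdc : d ≤ (q + 1) * c := by
    have := le_smul_ceilDiv (b := d) (Nat.succ_pos q)
    simpa [hcdef, smul_eq_mul] using this
  -- column cardinality bound
  have hcol : ∀ i₀ : Fin (q + 1), {j : Fin d | col j = i₀}.ncard ≤ c := by
    intro i₀
    have hinj : Function.Injective (fun j : {j : Fin d // col j = i₀} =>
        (⟨j.1.1 / (q + 1), by
          rw [Nat.div_lt_iff_lt_mul (Nat.succ_pos q)]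
          calc (j.1 : ℕ) < d := j.1.2
            _ ≤ (q + 1) * c := hdc
            _ = c * (q + 1) := mul_comm _ _⟩ : Fin c)) := by
      intro a b hab
      have h1 : a.1.1 / (q + 1) = b.1.1 / (q + 1) := congrArg Fin.val hab
      have h2 : a.1.1 % (q + 1) = i₀.1 := congrArg Fin.val a.2
      have h3 : b.1.1 % (q + 1) = i₀.1 := congrArg Fin.val b.2
      have key : a.1.1 = b.1.1 := by
        rw [← hdm a.1, ← hdm b.1, h1, h2, h3]
      exact Subtype.ext (Fin.ext key)
    have := Nat.card_le_card_of_injective _ hinj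
    rw [Nat.card_eq_fintype_card (α := Fin c), Fintype.card_fin] at this
    rwa [← Nat.card_coe_set_eq]
  -- row bound
  have hrowb : ∀ t : ℕ, {j : Fin d | row j = t}.ncard ≤ {i' : Fin (q + 1) | filled t i'}.ncard := by
    intro t
    refine Set.ncard_le_ncard_of_injOn col ?_ ?_ (Set.toFinite _)
    · intro j hj
      simp only [Set.mem_setOf_eq] at hj ⊢
      rw [← hj]; exact hfilled j
    · intro a ha b hb hab
      simp only [Set.mem_setOf_eq] at ha hb
      have h1 : a.1 % (q + 1) = b.1 % (q + 1) := congrArg Fin.val hab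
      have h2 : a.1 / (q + 1) = b.1 / (q + 1) := by
        show row a = row b
        rw [ha, hb]
      have key : a.1 = b.1 := by rw [← hdm a, ← hdm b, h1, h2]
      exact Fin.ext key
  -- filled/notfilled complement
  have hcompl : ∀ t : ℕ, {i' : Fin (q + 1) | filled t i'}.ncard
      + {i' : Fin (q + 1) | ¬ filled t i'}.ncard = q + 1 := by
    intro t
    have : {i' : Fin (q + 1) | ¬ filled t i'} = {i' : Fin (q + 1) | filled t i'}ᶜ := rfl
    rw [this, Set.ncard_add_ncard_compl, Nat.card_eq_fintype_card, Fintype.card_fin]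
  clear_value q c
  -- the cover
  set C1 : P → Set (P ⊕ Fin d) := fun z =>
    Sum.inl '' {u | u ∈ g z} ∪ Sum.inr '' {j | g z ≠ L₀ ∧ w (col j) ∈ g z} with hC1
  set C2 : Fin d → Set (P ⊕ Fin d) := fun j =>
    Sum.inr '' {j' | row j' = row j}
      ∪ (fun i' => Sum.inl (w i')) '' {i' | ¬ filled (row j) i' ∨ i' = col j}
      ∪ Sum.inr '' {j' | col j' = col j} with hC2
  apply mu_le_of_cover (V := P ⊕ Fin d) (by simp) (Sum.elim C1 C2)
  · -- membership
    rintro (z | j)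
    · exact Or.inl ⟨z, hg z, rfl⟩
    · exact Or.inl (Or.inl ⟨j, rfl, rfl⟩)
  · -- sizes
    rintro (z | j)
    · simp only [Sum.elim_inl, hC1]
      refine le_trans (Set.ncard_union_le _ _) ?_
      rw [Set.ncard_image_of_injective _ Sum.inl_injective,
        Set.ncard_image_of_injective _ Sum.inr_injective]
      have h1 : {u | u ∈ g z}.ncard = q + 1 := by
        rw [← Nat.card_coe_set_eq, hqdef]
        exact ProjectivePlane.pointCount_eq P (g z)
      have h2 : {j | g z ≠ L₀ ∧ w (col j) ∈ g z}.ncard ≤ c := by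
        rcases Set.eq_empty_or_nonempty {j | g z ≠ L₀ ∧ w (col j) ∈ g z} with hS | ⟨j₀, hj₀⟩
        · rw [hS, Set.ncard_empty]; omega
        · simp only [Set.mem_setOf_eq] at hj₀
          refine le_trans (Set.ncard_le_ncard (t := {j : Fin d | col j = col j₀}) ?_ ?_)
            (hcol (col j₀))
          · intro j hj
            simp only [Set.mem_setOf_eq] at hj ⊢
            have := Nondegenerate.eq_or_eq (P := P) (L := L)
              hj.2 hj₀.2 (hwmem (col j)) (hwmem (col j₀))
            rcases this with h | h
            · exact hwinj h
            · exact absurd h hj.1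
          · exact Set.toFinite _
      omega
    · simp only [Sum.elim_inr, hC2]
      rw [Set.union_right_comm]
      refine le_trans (Set.ncard_union_le _ _) ?_
      rw [← Set.image_union]
      have hAD : (Sum.inr '' ({j' | row j' = row j} ∪ {j' | col j' = col j})
          : Set (P ⊕ Fin d)).ncard
          ≤ {i' : Fin (q + 1) | filled (row j) i'}.ncard + (c - 1) := by
        rw [Set.ncard_image_of_injective _ Sum.inr_injective, ← Set.union_diff_self]
        refine le_trans (Set.ncard_union_le _ _) ?_
        have hsub : {j' : Fin d | col j' = col j} \ {j' | row j' = row j}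
            ⊆ {j' : Fin d | col j' = col j} \ {j} := by
          intro j' hj'
          refine ⟨hj'.1, fun h => hj'.2 ?_⟩
          rw [Set.mem_singleton_iff] at h
          rw [h]
          exact rfl
        have hc1 : 1 ≤ ({j' : Fin d | col j' = col j}).ncard := by
          rw [Nat.one_le_iff_ne_zero, ← Nat.pos_iff_ne_zero, Set.ncard_pos]
          exact ⟨j, rfl⟩
        have hdiff : ({j' : Fin d | col j' = col j} \ {j}).ncard
            = ({j' : Fin d | col j' = col j}).ncard - 1 :=
          Set.ncard_diff_singleton_of_mem rfl
        have := Set.ncard_le_ncard hsub (Set.toFinite _)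
        have := hcol (col j)
        have := hrowb (row j)
        omega
      have hB : ((fun i' => Sum.inl (w i')) ''
            {i' : Fin (q + 1) | ¬ filled (row j) i' ∨ i' = col j} : Set (P ⊕ Fin d)).ncard
          ≤ {i' : Fin (q + 1) | ¬ filled (row j) i'}.ncard + 1 := by
        refine le_trans (Set.ncard_image_le (Set.toFinite _)) ?_
        refine le_trans (Set.ncard_le_ncard (t := {i' : Fin (q + 1) | ¬ filled (row j) i'}
            ∪ {col j}) ?_ (Set.toFinite _)) ?_
        · rintro i' (h | h)
          · exact Or.inl h
          · exact Or.inr h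
        · exact le_trans (Set.ncard_union_le _ _) (by rw [Set.ncard_singleton])
      have := hcompl (row j)
      have hc1 : 1 ≤ c := by
        rcases Nat.eq_zero_or_pos c with h0 | h0
        · rw [h0, mul_zero] at hdc
          exact absurd (Nat.lt_of_lt_of_le j.2 hdc) (by omega)
        · exact h0
      omega
  · -- cover
    rintro (u | j) (u' | j') hxy
    · -- two old points
      have hne : u ≠ u' := fun h => hxy (by rw [h])
      set l := HasLines.mkLine (P := P) (L := L) hne with hl
      obtain ⟨hul, hul'⟩ := HasLines.mkLine_ax (P := P) (L := L) hne
      obtain ⟨z, hz⟩ := hgsurj l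
      exact ⟨Sum.inl z, Or.inl ⟨u, by rw [hz]; exact hul, rfl⟩,
        Or.inl ⟨u', by rw [hz]; exact hul', rfl⟩⟩
    · -- old point and new point
      by_cases hu : u ∈ L₀
      · obtain ⟨i', hi'⟩ := hwsurj u hu
        by_cases hf' : filled (row j') i'
        · obtain ⟨j₀, hj₀r, hj₀c⟩ := hcell _ _ hf'
          refine ⟨Sum.inr j₀, ?_, ?_⟩
          · exact Or.inl (Or.inr ⟨i', Or.inr (by rw [hj₀c]), by simp only []; rw [hi']⟩)
          · exact Or.inl (Or.inl ⟨j', by simp [Set.mem_setOf_eq, hj₀r], rfl⟩)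
        · refine ⟨Sum.inr j', ?_, ?_⟩
          · exact Or.inl (Or.inr ⟨i', Or.inl hf', by simp only []; rw [hi']⟩)
          · exact Or.inl (Or.inl ⟨j', rfl, rfl⟩)
      · have hne : u ≠ w (col j') := fun h => hu (h ▸ hwmem (col j'))
        set l := HasLines.mkLine (P := P) (L := L) hne with hl
        obtain ⟨hul, hwl⟩ := HasLines.mkLine_ax (P := P) (L := L) hne
        obtain ⟨z, hz⟩ := hgsurj l
        have hlne : g z ≠ L₀ := fun h => hu (by rw [← h, hz]; exact hul)
        refine ⟨Sum.inl z, Or.inl ⟨u, by rw [hz]; exact hul, rfl⟩,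
          Or.inr ⟨j', ⟨hlne, by rw [hz]; exact hwl⟩, rfl⟩⟩
    · -- new point and old point (symmetric)
      by_cases hu : u' ∈ L₀
      · obtain ⟨i', hi'⟩ := hwsurj u' hu
        by_cases hf' : filled (row j) i'
        · obtain ⟨j₀, hj₀r, hj₀c⟩ := hcell _ _ hf'
          refine ⟨Sum.inr j₀, ?_, ?_⟩
          · exact Or.inl (Or.inl ⟨j, by simp [Set.mem_setOf_eq, hj₀r], rfl⟩)
          · exact Or.inl (Or.inr ⟨i', Or.inr (by rw [hj₀c]), by simp only []; rw [hi']⟩)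
        · refine ⟨Sum.inr j, ?_, ?_⟩
          · exact Or.inl (Or.inl ⟨j, rfl, rfl⟩)
          · exact Or.inl (Or.inr ⟨i', Or.inl hf', by simp only []; rw [hi']⟩)
      · have hne : u' ≠ w (col j) := fun h => hu (h ▸ hwmem (col j))
        set l := HasLines.mkLine (P := P) (L := L) hne with hl
        obtain ⟨hul, hwl⟩ := HasLines.mkLine_ax (P := P) (L := L) hne
        obtain ⟨z, hz⟩ := hgsurj l
        have hlne : g z ≠ L₀ := fun h => hu (by rw [← h, hz]; exact hul)
        refine ⟨Sum.inl z, Or.inr ⟨j, ⟨hlne, by rw [hz]; exact hwl⟩, rfl⟩,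
          Or.inl ⟨u', by rw [hz]; exact hul, rfl⟩⟩
    · -- two new points
      rcases lt_trichotomy (row j) (row j') with hr | hr | hr
      · have hf' : filled (row j) (col j') := by
          have h1 := hdm j'
          have h2 := j'.2
          have h3 : (col j').1 = j'.1 % (q + 1) := rfl
          simp only [hfil_def]
          have : row j + 1 ≤ row j' := hr
          simp only [hrow_def] at this ⊢
          nlinarith [this, h1, h2, (col j').2]
        obtain ⟨j₀, hj₀r, hj₀c⟩ := hcell _ _ hf'
        refine ⟨Sum.inr j₀, ?_, ?_⟩
        · exact Or.inl (Or.inl ⟨j, by simp [Set.mem_setOf_eq, hj₀r], rfl⟩)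
        · exact Or.inr ⟨j', by simp [Set.mem_setOf_eq, hj₀c], rfl⟩
      · exact ⟨Sum.inr j, Or.inl (Or.inl ⟨j, rfl, rfl⟩),
          Or.inl (Or.inl ⟨j', by simp [Set.mem_setOf_eq, hr], rfl⟩)⟩
      · have hf' : filled (row j') (col j) := by
          have h1 := hdm j
          have h2 := j.2
          have h3 : (col j).1 = j.1 % (q + 1) := rfl
          simp only [hfil_def]
          have : row j' + 1 ≤ row j := hr
          simp only [hrow_def] at this ⊢
          nlinarith [this, h1, h2, (col j).2]
        obtain ⟨j₀, hj₀r, hj₀c⟩ := hcell _ _ hf'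
        refine ⟨Sum.inr j₀, ?_, ?_⟩
        · exact Or.inr ⟨j, by simp [Set.mem_setOf_eq, hj₀c], rfl⟩
        · exact Or.inl (Or.inl ⟨j', by simp [Set.mem_setOf_eq, hj₀r], rfl⟩)

/-- Let `p` be a prime power, `p² + p + 1 ≤ n`, and `d = n − (p² + p + 1)` with
`0 ≤ d ≤ (p+1)²`. Then `μ(n) ≤ p + ⌈d/(p+1)⌉`. -/
theorem mu_le_p_add_ceil (n p d : ℕ) (hp : IsPrimePow p)
    (hn : p ^ 2 + p + 1 ≤ n) (hd : d = n - (p ^ 2 + p + 1))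
    (hdb : d ≤ (p + 1) ^ 2) :
    mu n ≤ p + d ⌈/⌉ (p + 1) := by
  obtain ⟨r, e0, hr, he0, hpe⟩ := hp
  haveI : Fact (Nat.Prime r) := ⟨hr.nat_prime⟩
  letI K := GaloisField r e0
  haveI : Fintype K := Fintype.ofFinite K
  letI : DecidableEq K := Classical.decEq K
  haveI hfinPP : Finite (ℙ K (Fin 3 → K)) := Quotient.finite _
  haveI : Fintype (ℙ K (Fin 3 → K)) := Fintype.ofFinite _
  have hcardK : Fintype.card K = p := by
    rw [← Nat.card_eq_fintype_card]
    rw [GaloisField.card r e0 (by omega)]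
    exact hpe
  have hcardP : Fintype.card (ℙ K (Fin 3 → K)) = p ^ 2 + p + 1 := by
    rw [← Nat.card_eq_fintype_card, card_projectivization K, hcardK]
  have horder : ProjectivePlane.order (ℙ K (Fin 3 → K)) (ℙ K (Fin 3 → K)) = p := by
    have h := ProjectivePlane.card_points (ℙ K (Fin 3 → K)) (ℙ K (Fin 3 → K))
    rw [hcardP] at h
    set o := ProjectivePlane.order (ℙ K (Fin 3 → K)) (ℙ K (Fin 3 → K)) with ho
    rcases lt_trichotomy o p with h' | h' | h'
    · nlinarith
    · exact h'
    · nlinarith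
  have hn' : n = Fintype.card (ℙ K (Fin 3 → K)) + d := by rw [hcardP]; omega
  rw [hn']
  have := mu_card_add_le (ℙ K (Fin 3 → K)) (ℙ K (Fin 3 → K)) d
  rwa [horder] at this
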